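/- arXiv:2409.11892 — 3 statements merged into one kernel-verified Lean document; each statement's English description precedes it below -/
import Mathlib

section
/- Let S/R be a Frobenius extension with _R S_R centrally projective over R, ω a Wakamatsu tilting R-module, T = End_R(ω). If ω has finite projective dimension as a right T-module, then ω ⊗_T Hom_R(ω, S ⊗_R ω) ≅ S ⊗_R ω as left R-modules. -/
/-!
As an `R`-`R`-bimodule, `S` is a direct summand of `R^n`; hence `S ⊗_R ω` is a direct summand
of `ω^n`, i.e. it lies in `add ω`. For `X ∈ add ω`, witnessed by `π ∘ ι = id` with
`ι : X → ω^n`, `π : ω^n → X`, the evaluation `ω ⊗_T Hom_R(ω, X) → X` has the inverse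
`y ↦ ∑ⱼ (ι y)ⱼ ⊗ (π ∘ eⱼ)`: the balancing over `T = End_R(ω)` moves each `ω`-coordinate of
`ι ∘ g` across the tensor sign.
-/

open CategoryTheory

noncomputable section

/-- `Ext^n_A(M, N) = 0`, via Mathlib's `Ext` for the `ℤ`-linear abelian
category of left `A`-modules. -/
def ExtVanish (A : Type) [Ring A] (n : ℕ) (M N : Type) [AddCommGroup M] [Module A M]
    [AddCommGroup N] [Module A N] : Prop :=
  Subsingleton (((Ext ℤ (ModuleCat.{0} A) n).obj (Opposite.op (ModuleCat.of A M))).obj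
    (ModuleCat.of A N))

/-- `X` belongs to `add ω`: `X` is a direct summand of a finite direct sum of
copies of `ω`. -/
def MemAdd (A : Type) [Ring A] (ω : Type) [AddCommGroup ω] [Module A ω]
    (X : Type) [AddCommGroup X] [Module A X] : Prop :=
  ∃ (n : ℕ) (i : X →ₗ[A] (Fin n → ω)) (p : (Fin n → ω) →ₗ[A] X), ∀ x, p (i x) = x

/-- `f : M → X` is a left `add ω`-approximation of `M`: every map from `M` to a module
in `add ω` factors through `f`. -/
def IsLeftApprox (A : Type) [Ring A] (ω : Type) [AddCommGroup ω] [Module A ω]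
    {M X : Type} [AddCommGroup M] [Module A M] [AddCommGroup X] [Module A X]
    (f : M →ₗ[A] X) : Prop :=
  ∀ (Z : Type) [AddCommGroup Z] [Module A Z], MemAdd A ω Z →
    ∀ g : M →ₗ[A] Z, ∃ h : X →ₗ[A] Z, h.comp f = g

/-- There is an exact sequence `0 → M → ω₁ → ⋯ → ωₙ` with each `ωᵢ ∈ add ω` and each
`Im fᵢ ↪ ωᵢ` a left `add ω`-approximation.  Applied to `M = A` this says
`fadim_A ω ≥ n`; by Huang's theorem, applied to a module `M` it says exactly that
`M` is `ω`-`n`-torsionfree. -/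
def ApproxChain (A : Type) [Ring A] (ω : Type) [AddCommGroup ω] [Module A ω] :
    ℕ → ModuleCat.{0} A → Prop
  | 0, _ => True
  | n + 1, M =>
    ∃ (X : ModuleCat.{0} A) (f : M →ₗ[A] X), MemAdd A ω X ∧ Function.Injective f ∧
      IsLeftApprox A ω f ∧ ApproxChain A ω n (ModuleCat.of A (X ⧸ LinearMap.range f))

/-- `ω` is a Wakamatsu tilting `A`-module: finitely generated, self-orthogonal
(`Ext^i_A(ω, ω) = 0` for all `i ≥ 1`) and of infinite faithful dimension. -/
def IsWakamatsuTilting (A : Type) [Ring A] (ω : Type) [AddCommGroup ω] [Module A ω] :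
    Prop :=
  Module.Finite A ω ∧ (∀ i, 1 ≤ i → ExtVanish A i ω ω) ∧
    ∀ n, ApproxChain A ω n (ModuleCat.of A A)

/-- A ring extension `l : R → S` is a Frobenius extension; this is encoded by the
classical equivalent data of a Frobenius system: an `R`-`R`-bimodule map `E : S → R`
together with dual bases `x₁,…,xₘ, y₁,…,yₘ ∈ S`.  This is equivalent to: `_R S` is
finitely generated projective and `_S S_R ≅ Hom_R(_R S_S, _R R_R)` as `S`-`R`-bimodules. -/
def IsFrobeniusExtension {R S : Type} [Ring R] [Ring S] (l : R →+* S) : Prop :=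
  ∃ (E : S →+ R) (m : ℕ) (x y : Fin m → S),
    (∀ r s, E (l r * s) = r * E s) ∧ (∀ s r, E (s * l r) = E s * r) ∧
    (∀ s, (∑ i, x i * l (E (y i * s))) = s) ∧
    (∀ s, (∑ i, l (E (s * x i)) * y i) = s)

/-- The `R`-`R`-bimodule `S` (via `l`) is centrally projective over `R`, i.e. `_R S_R`
is a direct summand of a finite direct sum of copies of the regular bimodule `_R R_R`. -/
def IsCentrallyProjective {R S : Type} [Ring R] [Ring S] (l : R →+* S) : Prop :=
  ∃ (n : ℕ) (i : S →+ (Fin n → R)) (p : (Fin n → R) →+ S),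
    (∀ r s, i (l r * s) = fun j => r * i s j) ∧
    (∀ s r, i (s * l r) = fun j => i s j * r) ∧
    (∀ r v, p (fun j => r * v j) = l r * p v) ∧
    (∀ v r, p (fun j => v j * r) = p v * l r) ∧
    (∀ s, p (i s) = s)

/-- `(W, t)` realizes the induced module `S ⊗_R M` of the `R`-module `M` along
`l : R → S`: `t s m = s ⊗ m` is additive in each variable, `R`-balanced and
`S`-equivariant, and satisfies the universal property among `S`-modules. -/
def IsInducedTensor {R S : Type} [Ring R] [Ring S] (l : R →+* S)
    (M : Type) [AddCommGroup M] [Module R M]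
    (W : Type) [AddCommGroup W] [Module S W] (t : S →+ M →+ W) : Prop :=
  (∀ s r m, t (s * l r) m = t s (r • m)) ∧
  (∀ s' s m, t (s' * s) m = s' • t s m) ∧
  (∀ (V : Type) [AddCommGroup V] [Module S V] (b : S →+ M →+ V),
    (∀ s r m, b (s * l r) m = b s (r • m)) → (∀ s' s m, b (s' * s) m = s' • b s m) →
    ∃! h : W →ₗ[S] V, ∀ s m, h (t s m) = b s m)

/-- There is a projective resolution `0 → P_n → ⋯ → P_0 → M → 0` of length `n`,
i.e. the projective dimension of `M` is at most `n`. -/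
def ProjDimLe (A : Type) [Ring A] : ℕ → ModuleCat.{0} A → Prop
  | 0, M => Module.Projective A M
  | n + 1, M =>
    ∃ (P : ModuleCat.{0} A) (f : P →ₗ[A] M), Module.Projective A P ∧
      Function.Surjective f ∧ ProjDimLe A n (ModuleCat.of A (LinearMap.ker f))

/-- `(Q, τ)` realizes `ω ⊗_T Hom_R(ω, X)` for `T = End_R(ω)`. -/
def IsTensorOverEnd (R : Type) [Ring R] (ω X Q : Type) [AddCommGroup ω] [Module R ω]
    [AddCommGroup X] [Module R X] [AddCommGroup Q] [Module R Q]
    (τ : ω →+ (ω →ₗ[R] X) →+ Q) : Prop :=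
  (∀ (f : Module.End R ω) (x : ω) (g : ω →ₗ[R] X), τ (f x) g = τ x (g.comp f)) ∧
  (∀ (r : R) (x : ω) (g : ω →ₗ[R] X), τ (r • x) g = r • τ x g) ∧
  (∀ (V : Type) [AddCommGroup V] [Module R V] (b : ω →+ (ω →ₗ[R] X) →+ V),
    (∀ (f : Module.End R ω) (x : ω) (g : ω →ₗ[R] X), b (f x) g = b x (g.comp f)) →
    (∀ (r : R) (x : ω) (g : ω →ₗ[R] X), b (r • x) g = r • b x g) →
    ∃! h : Q →ₗ[R] V, ∀ x g, h (τ x g) = b x g)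

namespace IsTensorOverEnd

variable {R : Type} [Ring R] {ω X Q : Type} [AddCommGroup ω] [Module R ω]
  [AddCommGroup X] [Module R X] [AddCommGroup Q] [Module R Q] {τ : ω →+ (ω →ₗ[R] X) →+ Q}

theorem linearMap_ext (hτ : IsTensorOverEnd R ω X Q τ) {V : Type} [AddCommGroup V]
    [Module R V] {f g : Q →ₗ[R] V} (h : ∀ x φ, f (τ x φ) = g (τ x φ)) : f = g := by
  obtain ⟨hbal, hsmul, hUP⟩ := hτ
  obtain ⟨_, -, huniq⟩ := hUP V (τ.compr₂ f.toAddMonoidHom)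
    (fun φ x g => by simp [hbal]) (fun r x g => by simp [hsmul])
  exact (huniq f fun _ _ => rfl).trans (huniq g fun x φ => (h x φ).symm).symm

theorem exists_eval (hτ : IsTensorOverEnd R ω X Q τ) :
    ∃ e : Q →ₗ[R] X, ∀ x g, e (τ x g) = g x := by
  obtain ⟨-, -, hUP⟩ := hτ
  let ev : ω →+ (ω →ₗ[R] X) →+ X :=
    AddMonoidHom.mk' (fun x => AddMonoidHom.mk' (fun g => g x) fun _ _ => rfl)
      fun x x' => AddMonoidHom.ext fun g => g.map_add x x'
  obtain ⟨e, he, -⟩ := hUP X ev (fun _ _ _ => rfl) fun r x g => g.map_smul r x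
  exact ⟨e, he⟩

theorem exists_linearEquiv_eval (hτ : IsTensorOverEnd R ω X Q τ) (hX : MemAdd R ω X) :
    ∃ e : Q ≃ₗ[R] X, ∀ x g, e (τ x g) = g x := by
  obtain ⟨n, ι, π, hπι⟩ := hX
  obtain ⟨ev, hev⟩ := hτ.exists_eval
  have hsum : ∀ v : Fin n → ω, ∑ j, π (Pi.single j (v j)) = π v := fun v => by
    rw [← map_sum, Finset.univ_sum_single]
  let τR : (ω →ₗ[R] X) → ω →ₗ[R] Q := fun g =>
    { toFun := fun x => τ x g
      map_add' := fun x x' => by simp only [map_add, AddMonoidHom.add_apply]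
      map_smul' := fun r x => hτ.2.1 r x g }
  let πs : Fin n → ω →ₗ[R] X := fun j => π ∘ₗ LinearMap.single R (fun _ => ω) j
  let β : X →ₗ[R] Q := ∑ j, τR (πs j) ∘ₗ LinearMap.proj j ∘ₗ ι
  have hβ_apply : ∀ y, β y = ∑ j, τ (ι y j) (πs j) := fun y => by
    simp only [β, LinearMap.sum_apply]; rfl
  have hev_β : ev ∘ₗ β = LinearMap.id := LinearMap.ext fun y => by
    simp only [LinearMap.comp_apply, hβ_apply, map_sum, hev, LinearMap.id_apply]
    exact (hsum (ι y)).trans (hπι y)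
  have hβ_eval : ∀ x g, β (g x) = τ x g := fun x g => by
    have hbal : ∀ j, τ (ι (g x) j) (πs j) = τ x (πs j ∘ₗ LinearMap.proj j ∘ₗ ι ∘ₗ g) :=
      fun j => hτ.1 (LinearMap.proj j ∘ₗ ι ∘ₗ g) x _
    rw [hβ_apply, Finset.sum_congr rfl fun j _ => hbal j, ← map_sum]
    congr 1
    ext y
    simp only [LinearMap.sum_apply, LinearMap.comp_apply, LinearMap.proj_apply]
    exact (hsum (ι (g y))).trans (hπι (g y))
  have hβ_ev : β ∘ₗ ev = LinearMap.id :=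
    hτ.linearMap_ext fun x g => by simp only [LinearMap.comp_apply, hev, hβ_eval]; rfl
  exact ⟨LinearEquiv.ofLinearMap ev β hev_β hβ_ev, hev⟩

end IsTensorOverEnd

abbrev AddMonoidHom.coinducedModule (S M : Type) [Ring S] [AddCommGroup M] :
    Module S (S →+ M) where
  smul s f := f.comp (AddMonoidHom.mulRight s)
  one_smul f := AddMonoidHom.ext fun s' => congrArg f (mul_one s')
  mul_smul s₁ s₂ f := AddMonoidHom.ext fun s' => congrArg f (mul_assoc s' s₁ s₂).symm
  smul_zero _ := rfl
  smul_add _ _ _ := rfl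
  add_smul s₁ s₂ f := AddMonoidHom.ext fun s' => by
    show f (s' * (s₁ + s₂)) = f (s' * s₁) + f (s' * s₂)
    rw [mul_add, map_add]
  zero_smul f := AddMonoidHom.ext fun s' => by
    show f (s' * 0) = 0
    rw [mul_zero, map_zero]

namespace IsInducedTensor

variable {R S : Type} [Ring R] [Ring S] {l : R →+* S} {M W : Type} [AddCommGroup M]
  [Module R M] [AddCommGroup W] [Module S W] {t : S →+ M →+ W}

theorem linearMap_ext (hW : IsInducedTensor l M W t) {V : Type} [AddCommGroup V] [Module S V]
    {f g : W →ₗ[S] V} (h : ∀ s m, f (t s m) = g (t s m)) : f = g := by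
  obtain ⟨ht_bal, ht_smul, hUP⟩ := hW
  obtain ⟨_, -, huniq⟩ := hUP V (t.compr₂ f.toAddMonoidHom)
    (fun s r m => by simp [ht_bal]) (fun s' s m => by simp [ht_smul])
  exact (huniq f fun _ _ => rfl).trans (huniq g fun s m => (h s m).symm).symm

theorem span_eq_top (hW : IsInducedTensor l M W t) :
    Submodule.span S {w | ∃ s m, t s m = w} = ⊤ := by
  set N := Submodule.span S {w | ∃ s m, t s m = w}
  have hmkQ : N.mkQ = 0 := hW.linearMap_ext fun s m => by
    simpa [N] using Submodule.subset_span (R := S) (s := {w | ∃ s m, t s m = w}) ⟨s, m, rfl⟩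
  rw [← N.ker_mkQ, hmkQ, LinearMap.ker_zero]

open scoped Pointwise in
theorem closure_eq_top (hW : IsInducedTensor l M W t) :
    AddSubmonoid.closure {w | ∃ s m, t s m = w} = ⊤ := by
  have hsmul : (Set.univ : Set S) • {w | ∃ s m, t s m = w} ⊆ {w | ∃ s m, t s m = w} := by
    intro w hw
    obtain ⟨s', -, _, ⟨s, m, rfl⟩, rfl⟩ := Set.mem_smul.1 hw
    exact ⟨s' * s, m, hW.2.1 s' s m⟩
  have := congrArg Submodule.toAddSubmonoid hW.span_eq_top
  rw [Submodule.span_eq_closure, Submodule.top_toAddSubmonoid] at this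
  exact eq_top_iff.2 (this.ge.trans (AddSubmonoid.closure_mono hsmul))

theorem addMonoidHom_ext (hW : IsInducedTensor l M W t) {X : Type} [AddMonoid X]
    {f g : W →+ X} (h : ∀ s m, f (t s m) = g (t s m)) : f = g :=
  AddMonoidHom.eq_of_eqOn_denseM hW.closure_eq_top (by rintro _ ⟨s, m, rfl⟩; exact h s m)

/-- Lift through the coinduced `S`-module `Hom_ℤ(S, X)`, then evaluate at `1`. -/
theorem exists_addMonoidHom (hW : IsInducedTensor l M W t) {X : Type} [AddCommGroup X]
    (c : S →+ M →+ X) (hc : ∀ s r m, c (s * l r) m = c s (r • m)) :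
    ∃ f : W →+ X, ∀ s m, f (t s m) = c s m := by
  let _ := AddMonoidHom.coinducedModule S X
  let b : S →+ M →+ (S →+ X) :=
    AddMonoidHom.mk' (fun s => AddMonoidHom.mk' (fun m => (c.flip m).comp
      (AddMonoidHom.mulRight s)) fun m m' => by ext; simp) fun s s' => by ext; simp [mul_add]
  obtain ⟨h, hh, -⟩ := hW.2.2 _ b (fun s r m => by ext s'; simp [b, ← mul_assoc, hc])
    (fun s' s m => by ext s''; simp only [b]; exact congrArg (c · m) (mul_assoc s'' s' s).symm)
  exact ⟨(AddMonoidHom.eval 1).comp h.toAddMonoidHom, fun s m => by simp [hh, b]⟩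

theorem memAdd (hW : IsInducedTensor l M W t) (hCP : IsCentrallyProjective l) :
    letI : Module R W := Module.compHom W l
    MemAdd R M W := by
  let _ : Module R W := Module.compHom W l
  obtain ⟨n, i, p, hi_left, hi_right, hp_left, hp_right, hpi⟩ := hCP
  have ht_bal := hW.1
  have ht_smul := hW.2.1
  let u : Fin n → S := fun j => p (Pi.single j 1)
  have hp_single : ∀ j r, p (Pi.single j r) = u j * l r := fun j r => by
    rw [← hp_right]; congr; ext; simp [Pi.single_apply]
  have hu_comm : ∀ j r, u j * l r = l r * u j := fun j r => by
    rw [← hp_single, ← hp_left]; congr; ext; simp [Pi.single_apply]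
  let π : (Fin n → M) →ₗ[R] W :=
    { toFun := fun v => ∑ j, t (u j) (v j)
      map_add' := fun v v' => by simp [Finset.sum_add_distrib]
      map_smul' := fun r v => by
        rw [RingHom.id_apply, Finset.smul_sum]
        refine Finset.sum_congr rfl fun j _ => ?_
        show t (u j) (r • v j) = l r • t (u j) (v j)
        rw [← ht_bal, hu_comm, ht_smul] }
  let c : S →+ M →+ (Fin n → M) :=
    AddMonoidHom.mk' (fun s => AddMonoidHom.mk' (fun m j => i s j • m) fun m m' => by
      ext; simp) fun s s' => by ext; simp [add_smul]
  obtain ⟨ι, hι⟩ := hW.exists_addMonoidHom c fun s r m => by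
    ext j; simp [c, hi_right, mul_smul]
  have hι_smul : ∀ (r : R) w, ι (r • w) = r • ι w := fun r => DFunLike.congr_fun <|
    hW.addMonoidHom_ext (f := ι.comp (DistribSMul.toAddMonoidHom W r))
      (g := (DistribSMul.toAddMonoidHom _ r).comp ι) fun s m => by
        show ι (l r • t s m) = r • ι (t s m)
        rw [← ht_smul, hι, hι]; ext j; simp [c, hi_left, mul_smul]
  refine ⟨n, { ι with map_smul' := hι_smul }, π, DFunLike.congr_fun <|
    hW.addMonoidHom_ext (f := π.toAddMonoidHom.comp ι) (g := .id W) fun s m => ?_⟩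
  calc π (ι (t s m)) = ∑ j, t (p (Pi.single j (i s j))) m := by
        simp [π, hι, c, hp_single, ← ht_bal]
    _ = t s m := by
      rw [← AddMonoidHom.finsetSum_apply, ← map_sum, ← map_sum, Finset.univ_sum_single, hpi]

end IsInducedTensor

theorem inducedTensor_hom_tensor_iso_general
    (R S : Type) [Ring R] [Ring S] (l : R →+* S)
    (hCP : IsCentrallyProjective l)
    (ω : Type) [AddCommGroup ω] [Module R ω]
    (W : Type) [AddCommGroup W] [Module S W] (t : S →+ ω →+ W)
    (hW : IsInducedTensor l ω W t) :
    letI : Module R W := Module.compHom W l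
    ∀ (Q : Type) [AddCommGroup Q] [Module R Q] (τ : ω →+ (ω →ₗ[R] W) →+ Q),
      (∀ (f : Module.End R ω) (x : ω) (g : ω →ₗ[R] W), τ (f x) g = τ x (g.comp f)) →
      (∀ (r : R) (x : ω) (g : ω →ₗ[R] W), τ (r • x) g = r • τ x g) →
      (∀ (V : Type) [AddCommGroup V] [Module R V] (b : ω →+ (ω →ₗ[R] W) →+ V),
        (∀ (f : Module.End R ω) (x : ω) (g : ω →ₗ[R] W), b (f x) g = b x (g.comp f)) →
        (∀ (r : R) (x : ω) (g : ω →ₗ[R] W), b (r • x) g = r • b x g) →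
        ∃! h : Q →ₗ[R] V, ∀ x g, h (τ x g) = b x g) →
      ∃ e : Q ≃ₗ[R] W, ∀ (x : ω) (g : ω →ₗ[R] W), e (τ x g) = g x := by
  let _ : Module R W := Module.compHom W l
  intro Q _ _ τ hbal hsmul hUP
  exact IsTensorOverEnd.exists_linearEquiv_eval ⟨hbal, hsmul, hUP⟩ (hW.memAdd hCP)

/-- Let `S/R` be a Frobenius extension with `_R S_R` centrally
projective over `R`, `ω` a Wakamatsu tilting `R`-module, `T = End_R(ω)`.  If `ω` has
finite projective dimension as a right `T`-module, then
`ω ⊗_T Hom_R(ω, S ⊗_R ω) ≅ S ⊗_R ω` as left `R`-modules (via the canonical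
evaluation map `x ⊗ g ↦ g x`).

Here `(W, t)` realizes `S ⊗_R ω` and `(Q, τ)` realizes the balanced tensor product
`ω ⊗_T Hom_R(ω, W)` over `T`: `τ` is additive in each variable, `T`-balanced
(`τ (f x) g = τ x (g ∘ f)`, the right `T`-action on `ω` being `x · f = f x` and the
left `T`-action on `Hom_R(ω, W)` being precomposition), compatible with the left
`R`-action on `ω`, and universal among such pairings into left `R`-modules.  Right
`T`-modules are identified with left `Module.End R ω`-modules, so finiteness of
`pd(ω_T)` is expressed for `ω` with the application action of `Module.End R ω`. -/
theorem inducedTensor_hom_tensor_iso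
    (R S : Type) [Ring R] [Ring S] [IsNoetherianRing R] [IsNoetherianRing Rᵐᵒᵖ]
    [IsNoetherianRing S] [IsNoetherianRing Sᵐᵒᵖ] (l : R →+* S)
    (hFrob : IsFrobeniusExtension l) (hCP : IsCentrallyProjective l)
    (ω : Type) [AddCommGroup ω] [Module R ω] (hω : IsWakamatsuTilting R ω)
    (hpd : ∃ n, ProjDimLe (Module.End R ω) n (ModuleCat.of (Module.End R ω) ω))
    (W : Type) [AddCommGroup W] [Module S W] (t : S →+ ω →+ W)
    (hW : IsInducedTensor l ω W t) :
    letI : Module R W := Module.compHom W l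
    ∀ (Q : Type) [AddCommGroup Q] [Module R Q] (τ : ω →+ (ω →ₗ[R] W) →+ Q),
      (∀ (f : Module.End R ω) (x : ω) (g : ω →ₗ[R] W), τ (f x) g = τ x (g.comp f)) →
      (∀ (r : R) (x : ω) (g : ω →ₗ[R] W), τ (r • x) g = r • τ x g) →
      (∀ (V : Type) [AddCommGroup V] [Module R V] (b : ω →+ (ω →ₗ[R] W) →+ V),
        (∀ (f : Module.End R ω) (x : ω) (g : ω →ₗ[R] W), b (f x) g = b x (g.comp f)) →
        (∀ (r : R) (x : ω) (g : ω →ₗ[R] W), b (r • x) g = r • b x g) →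
        ∃! h : Q →ₗ[R] V, ∀ x g, h (τ x g) = b x g) →
      ∃ e : Q ≃ₗ[R] W, ∀ (x : ω) (g : ω →ₗ[R] W), e (τ x g) = g x :=
  inducedTensor_hom_tensor_iso_general R S l hCP ω W t hW

end
end

section
/- Let R be a two-sided Noetherian ring, ω a finitely generated R-module with fadim_R(ω) ≥ n+2 and Ext^i_R(ω,ω)=0 for 1 ≤ i ≤ n, and let 0 → M → X → N → 0 be a short exact sequence of finitely generated R-modules with X ∈ add(ω) such that Hom_R(X,ω) → Hom_R(M,ω) is surjective. Then M is ω-n-torsionfree if and only if N is ω-(n-1)-torsionfree. -/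
/-!
Both sides are read through `ApproxChain`. If `N` has a chain of length `n - 1`, prefixing it
with `f : M → X` gives one of length `n` for `M`. Conversely, if `f' : M → X'` starts a chain for
`M`, then `f` and `f'` are both left `add ω`-approximations, so each factors through the other, and
a Schanuel-type argument gives `X' ⊕ N ≅ X ⊕ coker f'`. Adding or removing a direct summand in
`add ω` does not change the lengths of chains a module admits, so `N` inherits a chain of length
`n - 1` from `coker f'`.
-/

open CategoryTheory

noncomputable section

variable {A : Type} [Ring A] {ω : Type} [AddCommGroup ω] [Module A ω]
  {M N W X X' : Type} [AddCommGroup M] [Module A M] [AddCommGroup N] [Module A N]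
  [AddCommGroup W] [Module A W] [AddCommGroup X] [Module A X]
  [AddCommGroup X'] [Module A X']

lemma isLeftApprox_of_factors_omega (f : M →ₗ[A] X)
    (h : ∀ u : M →ₗ[A] ω, ∃ v : X →ₗ[A] ω, v.comp f = u) : IsLeftApprox A ω f := by
  intro Z _ _ ⟨m, i, p, hpi⟩ g
  choose v hv using fun k : Fin m => h ((LinearMap.proj k).comp (i.comp g))
  refine ⟨p.comp (LinearMap.pi v), LinearMap.ext fun x => ?_⟩
  have hpi_v : LinearMap.pi v (f x) = i (g x) := funext fun k => LinearMap.congr_fun (hv k) x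
  simp only [LinearMap.comp_apply, hpi_v, hpi]

lemma MemAdd.prod (hW : MemAdd A ω W) (hX : MemAdd A ω X) : MemAdd A ω (W × X) := by
  obtain ⟨a, i, p, hpi⟩ := hW
  obtain ⟨b, i', p', hpi'⟩ := hX
  let e : ((Fin a → ω) × (Fin b → ω)) ≃ₗ[A] (Fin (a + b) → ω) :=
    (LinearEquiv.sumArrowLequivProdArrow (Fin a) (Fin b) A ω).symm.trans
      (LinearEquiv.funCongrLeft A ω finSumFinEquiv.symm)
  refine ⟨a + b, e.toLinearMap.comp (i.prodMap i'), (p.prodMap p').comp e.symm.toLinearMap, ?_⟩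
  rintro ⟨w, x⟩
  simp [hpi w, hpi' x]

lemma ApproxChain.of_linearEquiv {k : ℕ} (e : M ≃ₗ[A] N)
    (h : ApproxChain A ω k (ModuleCat.of A M)) : ApproxChain A ω k (ModuleCat.of A N) := by
  induction k generalizing M N with
  | zero => trivial
  | succ k ih =>
    obtain ⟨X, f, hX, hinj, happrox, hchain⟩ := h
    refine ⟨X, f.comp e.symm.toLinearMap, hX, hinj.comp e.symm.injective, ?_, ?_⟩
    · intro Z _ _ hZ g
      obtain ⟨h, hh⟩ := happrox Z hZ (g.comp e.toLinearMap)
      exact ⟨h, by rw [← LinearMap.comp_assoc, hh, LinearMap.comp_assoc]; simp⟩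
    · have hrange : LinearMap.range (f.comp e.symm.toLinearMap) = LinearMap.range f :=
        LinearMap.range_comp_of_range_eq_top f e.symm.range
      exact ih (Submodule.quotEquivOfEq _ _ hrange.symm) hchain

def quotRangeProdMapIdEquiv (f : M →ₗ[A] X) :
    ((W × X) ⧸ LinearMap.range (LinearMap.id.prodMap f : W × M →ₗ[A] W × X)) ≃ₗ[A]
      (X ⧸ LinearMap.range f) := by
  refine Function.Exact.linearEquivOfSurjective (g := (LinearMap.range f).mkQ ∘ₗ
    LinearMap.snd A W X) (fun ⟨w, x⟩ => ?_) ((Submodule.mkQ_surjective _).comp Prod.snd_surjective)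
  simp only [LinearMap.comp_apply, LinearMap.snd_apply, Submodule.mkQ_apply,
    Submodule.Quotient.mk_eq_zero, LinearMap.mem_range, Set.mem_range, LinearMap.prodMap_apply,
    LinearMap.id_apply, Prod.ext_iff]
  exact ⟨fun ⟨m, hm⟩ => ⟨(w, m), rfl, hm⟩, fun ⟨⟨_, m⟩, _, hm⟩ => ⟨m, hm⟩⟩

/-- Since `r` splits off the `W`-summand of the source, it reappears in the cokernel. -/
def quotRangeCompInrEquiv (φ : W × N →ₗ[A] X) (r : X →ₗ[A] W)
    (hr : r.comp φ = LinearMap.fst A W N) :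
    (X ⧸ LinearMap.range (φ.comp (LinearMap.inr A W N))) ≃ₗ[A] (W × (X ⧸ LinearMap.range φ)) := by
  have hrφ (w : W) (n : N) : r (φ (w, n)) = w := LinearMap.congr_fun hr (w, n)
  refine Function.Exact.linearEquivOfSurjective (g := r.prod (LinearMap.range φ).mkQ)
    (fun x => ?_) (fun ⟨w, q⟩ => ?_)
  · simp only [LinearMap.prod_apply, Function.prod_apply, Prod.mk_eq_zero, Submodule.mkQ_apply,
      Submodule.Quotient.mk_eq_zero, LinearMap.mem_range, Set.mem_range, LinearMap.comp_apply,
      LinearMap.inr_apply]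
    constructor
    · rintro ⟨hx, ⟨w, n⟩, rfl⟩
      obtain rfl : w = 0 := (hrφ w n).symm.trans hx
      exact ⟨n, rfl⟩
    · rintro ⟨n, rfl⟩
      exact ⟨hrφ 0 n, (0, n), rfl⟩
  · obtain ⟨x, rfl⟩ := (LinearMap.range φ).mkQ_surjective q
    refine ⟨x + φ (w - r x, 0), Prod.ext ?_ ?_⟩
    · simp [hrφ]
    · simp

def quotRangeProdEquiv (f : M →ₗ[A] X) (f' : M →ₗ[A] X') (h : X →ₗ[A] X')
    (hh : h.comp f = f') :
    ((X × X') ⧸ LinearMap.range (f.prod f')) ≃ₗ[A] (X' × (X ⧸ LinearMap.range f)) := by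
  have hfm (m : M) : h (f m) = f' m := LinearMap.congr_fun hh m
  refine Function.Exact.linearEquivOfSurjective
    (g := (LinearMap.snd A X X' - h.comp (LinearMap.fst A X X')).prod
      ((LinearMap.range f).mkQ.comp (LinearMap.fst A X X'))) (fun ⟨x, x'⟩ => ?_)
    (fun ⟨y, q⟩ => ?_)
  · simp only [LinearMap.prod_apply, Function.prod_apply, LinearMap.sub_apply, LinearMap.comp_apply,
      LinearMap.fst_apply, LinearMap.snd_apply, Submodule.mkQ_apply, Prod.mk_eq_zero,
      sub_eq_zero, Submodule.Quotient.mk_eq_zero, LinearMap.mem_range, Set.mem_range,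
      Prod.mk.injEq]
    constructor
    · rintro ⟨rfl, m, rfl⟩
      exact ⟨m, rfl, (hfm m).symm⟩
    · rintro ⟨m, rfl, rfl⟩
      exact ⟨(hfm m).symm, m, rfl⟩
  · obtain ⟨x, rfl⟩ := (LinearMap.range f).mkQ_surjective q
    exact ⟨(x, y + h x), by simp⟩

def schanuelEquiv (f : M →ₗ[A] X) (f' : M →ₗ[A] X') (h : X →ₗ[A] X') (hh : h.comp f = f')
    (h' : X' →ₗ[A] X) (hh' : h'.comp f' = f) :
    (X' × (X ⧸ LinearMap.range f)) ≃ₗ[A] (X × (X' ⧸ LinearMap.range f')) :=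
  have hrange : (LinearMap.range (f.prod f')).map (LinearEquiv.prodComm A X X').toLinearMap =
      LinearMap.range (f'.prod f) := by
    rw [← LinearMap.range_comp]
    rfl
  (quotRangeProdEquiv f f' h hh).symm ≪≫ₗ Submodule.Quotient.equiv _ _ _ hrange ≪≫ₗ
    quotRangeProdEquiv f' f h' hh'

lemma ApproxChain.prod_left {k : ℕ} (hW : MemAdd A ω W)
    (h : ApproxChain A ω k (ModuleCat.of A N)) : ApproxChain A ω k (ModuleCat.of A (W × N)) := by
  induction k generalizing W N with
  | zero => trivial
  | succ k ih =>
    obtain ⟨X, f, hX, hinj, happrox, hchain⟩ := h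
    refine ⟨ModuleCat.of A (W × X), LinearMap.id.prodMap f, hW.prod hX,
      Function.injective_id.prodMap hinj, ?_, ?_⟩
    · intro Z _ _ hZ g
      obtain ⟨h, hh⟩ := happrox Z hZ (g.comp (LinearMap.inr A W N))
      refine ⟨(g.comp (LinearMap.inl A W N)).coprod h, LinearMap.ext fun ⟨w, n⟩ => ?_⟩
      have hn : h (f n) = g (0, n) := LinearMap.congr_fun hh n
      simp [hn, ← map_add]
    · exact ApproxChain.of_linearEquiv (quotRangeProdMapIdEquiv f).symm hchain

lemma ApproxChain.of_prod_left {k : ℕ} (hW : MemAdd A ω W)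
    (h : ApproxChain A ω k (ModuleCat.of A (W × N))) : ApproxChain A ω k (ModuleCat.of A N) := by
  cases k with
  | zero => trivial
  | succ k =>
    obtain ⟨X, φ, hX, hinj, happrox, hchain⟩ := h
    refine ⟨X, φ.comp (LinearMap.inr A W N), hX, hinj.comp LinearMap.inr_injective, ?_, ?_⟩
    · intro Z _ _ hZ g
      obtain ⟨h, hh⟩ := happrox Z hZ (g.comp (LinearMap.snd A W N))
      exact ⟨h, by rw [← LinearMap.comp_assoc, hh]; rfl⟩
    · obtain ⟨r, hr⟩ := happrox W hW (LinearMap.fst A W N)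
      exact ApproxChain.of_linearEquiv (quotRangeCompInrEquiv φ r hr).symm (hchain.prod_left hW)

theorem torsionfree_recurrence_general
    (R : Type) [Ring R]
    (ω : Type) [AddCommGroup ω] [Module R ω] (n : ℕ)
    (M X N : Type) [AddCommGroup M] [Module R M]
    [AddCommGroup X] [Module R X]
    [AddCommGroup N] [Module R N]
    (f : M →ₗ[R] X) (g : X →ₗ[R] N)
    (hf : Function.Injective f) (hg : Function.Surjective g) (hfg : Function.Exact f g)
    (hX : MemAdd R ω X)
    (happrox : ∀ u : M →ₗ[R] ω, ∃ v : X →ₗ[R] ω, v.comp f = u) :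
    ApproxChain R ω n (ModuleCat.of R M) ↔
      ApproxChain R ω (n - 1) (ModuleCat.of R N) := by
  have hfapprox : IsLeftApprox R ω f := isLeftApprox_of_factors_omega f happrox
  let eN : (X ⧸ LinearMap.range f) ≃ₗ[R] N := hfg.linearEquivOfSurjective hg
  cases n with
  | zero => exact Iff.rfl
  | succ k =>
    refine ⟨fun ⟨X', f', hX', _, hf'approx, hchain'⟩ => ?_,
      fun h => ⟨ModuleCat.of R X, f, hX, hf, hfapprox, h.of_linearEquiv eN.symm⟩⟩
    obtain ⟨h, hh⟩ := hfapprox X' hX' f'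
    obtain ⟨h', hh'⟩ := hf'approx X hX f
    have hchain : ApproxChain R ω k (ModuleCat.of R (X' × (X ⧸ LinearMap.range f))) :=
      (hchain'.prod_left hX).of_linearEquiv (schanuelEquiv f f' h hh h' hh').symm
    exact (hchain.of_prod_left hX').of_linearEquiv eN

/-- Let `R` be a two-sided Noetherian ring, `ω` a finitely generated
`R`-module with `fadim_R ω ≥ n + 2` and `Ext^i_R(ω, ω) = 0` for `1 ≤ i ≤ n`, and let
`0 → M → X → N → 0` be a short exact sequence of finitely generated `R`-modules with
`X ∈ add ω` and `Hom_R(X, ω) → Hom_R(M, ω)` surjective.  Then `M` is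
`ω`-`n`-torsionfree iff `N` is `ω`-`(n-1)`-torsionfree. -/
theorem torsionfree_recurrence
    (R : Type) [Ring R] [IsNoetherianRing R] [IsNoetherianRing Rᵐᵒᵖ]
    (ω : Type) [AddCommGroup ω] [Module R ω] [Module.Finite R ω] (n : ℕ) (hn : 1 ≤ n)
    (hfadim : ApproxChain R ω (n + 2) (ModuleCat.of R R))
    (hself : ∀ i, 1 ≤ i → i ≤ n → ExtVanish R i ω ω)
    (M X N : Type) [AddCommGroup M] [Module R M] [Module.Finite R M]
    [AddCommGroup X] [Module R X] [Module.Finite R X]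
    [AddCommGroup N] [Module R N] [Module.Finite R N]
    (f : M →ₗ[R] X) (g : X →ₗ[R] N)
    (hf : Function.Injective f) (hg : Function.Surjective g) (hfg : Function.Exact f g)
    (hX : MemAdd R ω X)
    (happrox : ∀ u : M →ₗ[R] ω, ∃ v : X →ₗ[R] ω, v.comp f = u) :
    ApproxChain R ω n (ModuleCat.of R M) ↔
      ApproxChain R ω (n - 1) (ModuleCat.of R N) :=
  torsionfree_recurrence_general R ω n M X N f g hf hg hfg hX happrox

end
end

section
/- Let S/R be a Frobenius extension with _R S_R centrally projective over R and M a finitely generated R-module with Ext^i_R(M, ω) = 0 for all i ≥ 1. Then Ext^i_S(S ⊗_R M, S ⊗_R ω) = 0 for all i ≥ 1. -/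
open CategoryTheory

noncomputable section

/-!
Under a Frobenius system `(E, x, y)` the coextension `Hom_R(S, -)` is also left adjoint to
restriction, with unit `v ↦ (z ↦ E z • v)` and counit `f ↦ ∑ xᵢ • f yᵢ`. Hence it is exact,
preserves projectives, and is isomorphic on objects to any realization of `S ⊗_R -`; so it carries
a projective resolution of `M` to one of `V`, and adjunction gives
`Ext^i_S(V, W) ≅ Ext^i_R(M, W|_R)`. Finally `W|_R ≅ Hom_R(S, ω)` is a retract of `ωⁿ` because
`_R S_R` is a retract of `Rⁿ`, and `Ext^i_R(M, -)` vanishes on `ωⁿ`.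
-/

universe u v

open Limits ModuleCat

namespace CategoryTheory.Adjunction

variable {C D : Type*} [Category.{v} C] [Category.{v} D] [Abelian C] [Abelian D]
  {F : C ⥤ D} {G : D ⥤ C}

def linearYonedaObjMapIso (adj : F ⊣ G) [F.Additive] (K : ChainComplex C ℕ) (Y : D) :
    ChainComplex.linearYonedaObj ((F.mapHomologicalComplex _).obj K) ℤ Y ≅
      K.linearYonedaObj ℤ (G.obj Y) :=
  HomologicalComplex.Hom.isoOfComponents
    (fun i => (adj.homAddEquiv (K.X i) Y).toIntLinearEquiv.toModuleIso) (by
      intro i j _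
      ext φ
      exact (adj.homEquiv_naturality_left _ _).symm)

def extIso [EnoughProjectives C] [EnoughProjectives D] (adj : F ⊣ G) [F.Additive]
    [F.PreservesHomology] [G.PreservesEpimorphisms] (X : C) (Y : D) (n : ℕ) :
    ((Ext ℤ D n).obj (Opposite.op (F.obj X))).obj Y ≅
      ((Ext ℤ C n).obj (Opposite.op X)).obj (G.obj Y) :=
  have := Functor.preservesProjectiveObjects_of_adjunction_of_preservesEpimorphisms adj
  (F.mapProjectiveResolution (projectiveResolution X)).isoExt n Y ≪≫
    HomologicalComplex.homologyMapIso (adj.linearYonedaObjMapIso _ Y) n ≪≫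
    ((projectiveResolution X).isoExt n (G.obj Y)).symm

end CategoryTheory.Adjunction

namespace CategoryTheory.ProjectiveResolution

variable {C : Type*} [Category.{v} C] [Abelian C] [EnoughProjectives C] {X : C}

lemma isZero_ext_succ_iff (P : ProjectiveResolution X) (Y : C) (n : ℕ) :
    IsZero (((Ext ℤ C (n + 1)).obj (Opposite.op X)).obj Y) ↔
      ∀ φ : P.complex.X (n + 1) ⟶ Y, P.complex.d (n + 2) (n + 1) ≫ φ = 0 →
        ∃ ψ : P.complex.X n ⟶ Y, P.complex.d (n + 1) n ≫ ψ = φ := by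
  rw [(P.isoExt (n + 1) Y).isZero_iff, ← HomologicalComplex.exactAt_iff_isZero_homology,
    HomologicalComplex.exactAt_iff' _ n (n + 1) (n + 2) (by simp) (by simp),
    ShortComplex.moduleCat_exact_iff]
  rfl

end CategoryTheory.ProjectiveResolution

lemma isZero_ext_succ_pi {A : Type u} [Ring A] {X : ModuleCat.{u} A} {ι : Type u}
    (Y : ι → Type u) [∀ i, AddCommGroup (Y i)] [∀ i, Module A (Y i)] {n : ℕ}
    (h : ∀ i, IsZero (((Ext ℤ (ModuleCat.{u} A) (n + 1)).obj (Opposite.op X)).obj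
      (ModuleCat.of A (Y i)))) :
    IsZero (((Ext ℤ (ModuleCat.{u} A) (n + 1)).obj (Opposite.op X)).obj
      (ModuleCat.of A (∀ i, Y i))) := by
  let P := projectiveResolution X
  simp only [P.isZero_ext_succ_iff] at h ⊢
  intro φ hφ
  choose ψ hψ using fun i => h i (φ ≫ ModuleCat.ofHom (LinearMap.proj i))
    (by rw [← Category.assoc, hφ, zero_comp])
  refine ⟨ModuleCat.ofHom (LinearMap.pi fun i => (ψ i).hom), ?_⟩
  ext v i
  exact ConcreteCategory.congr_hom (hψ i) v

variable {R S : Type} [Ring R] [Ring S] {l : R →+* S}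

namespace ModuleCat.CoextendScalars

variable {X : ModuleCat.{0} R}

lemma ext' {g g' : (coextendScalars l).obj X} (h : ∀ s : S, g s = g' s) : g = g' :=
  ext (LinearMap.ext h)

def mk (φ : S → X) (map_add : ∀ a b, φ (a + b) = φ a + φ b)
    (map_smul : ∀ (r : R) s, φ (l r * s) = r • φ s) : (coextendScalars l).obj X :=
  (equiv l X).symm ⟨⟨φ, map_add⟩, map_smul⟩

lemma apply_map_mul (g : (coextendScalars l).obj X) (r : R) (s : S) : g (l r * s) = r • g s :=
  (equiv l X g).map_smul r s

lemma apply_sum {ι : Type} (g : (coextendScalars l).obj X) (s : Finset ι) (a : ι → S) :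
    g (∑ i ∈ s, a i) = ∑ i ∈ s, g (a i) :=
  map_sum (equiv l X g) a s

lemma sum_apply {ι : Type} (s : Finset ι) (g : ι → (coextendScalars l).obj X) (z : S) :
    (∑ i ∈ s, g i) z = ∑ i ∈ s, g i z := by
  change (equiv l X (∑ i ∈ s, g i)) z = _
  rw [map_sum]
  exact LinearMap.sum_apply _ _ _

end ModuleCat.CoextendScalars

instance : (coextendScalars.{0, 0, 0} l).Additive :=
  Functor.additive_of_preserves_binary_products _

structure FrobeniusSystem (l : R →+* S) where
  E : S →+ R
  m : ℕ
  x : Fin m → S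
  y : Fin m → S
  E_map_mul : ∀ r s, E (l r * s) = r * E s
  E_mul_map : ∀ s r, E (s * l r) = E s * r
  sum_x_mul_E_y_mul : ∀ s, ∑ i, x i * l (E (y i * s)) = s
  sum_E_mul_x_mul_y : ∀ s, ∑ i, l (E (s * x i)) * y i = s

namespace FrobeniusSystem

variable (D : FrobeniusSystem l)

lemma sum_E_mul_x_smul_apply_y {Y : Type} [AddCommGroup Y] [Module R Y] (f : S →+ Y)
    (hf : ∀ r z, f (l r * z) = r • f z) (z : S) : ∑ i, D.E (z * D.x i) • f (D.y i) = f z := by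
  conv_rhs => rw [← D.sum_E_mul_x_mul_y z]
  simp only [map_sum, hf]

lemma sum_x_smul_apply_y_mul {Y : Type} [AddCommGroup Y] [Module S Y] (f : S →+ Y)
    (hf : ∀ r z, f (l r * z) = l r • f z) (s : S) :
    ∑ i, D.x i • f (D.y i * s) = s • ∑ i, D.x i • f (D.y i) := by
  calc ∑ i, D.x i • f (D.y i * s)
      = ∑ i, ∑ j, (D.x i * l (D.E (D.y i * (s * D.x j)))) • f (D.y j) := by
        refine Finset.sum_congr rfl fun i _ => ?_
        conv_lhs => rw [← D.sum_E_mul_x_mul_y (D.y i * s)]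
        simp only [map_sum, hf, Finset.smul_sum, mul_smul, mul_assoc]
    _ = ∑ j, (s * D.x j) • f (D.y j) := by
        rw [Finset.sum_comm]
        simp only [← Finset.sum_smul, D.sum_x_mul_E_y_mul]
    _ = s • ∑ i, D.x i • f (D.y i) := by simp only [Finset.smul_sum, mul_smul]

def unitApp (X : ModuleCat.{0} R) :
    X ⟶ (restrictScalars l).obj ((coextendScalars l).obj X) :=
  ofHom (Y := (restrictScalars l).obj ((coextendScalars l).obj X))
  { toFun v := CoextendScalars.mk (fun z => D.E z • v) (fun a b => by rw [map_add, add_smul])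
      (fun r z => by rw [D.E_map_mul, mul_smul])
    map_add' a b := CoextendScalars.ext' fun z => smul_add (D.E z) a b
    map_smul' r v := CoextendScalars.ext' fun z => by
      change D.E z • r • v = D.E (z * l r) • v
      rw [D.E_mul_map, mul_smul] }

def counitApp (Y : ModuleCat.{0} S) :
    (coextendScalars l).obj ((restrictScalars l).obj Y) ⟶ Y :=
  ofHom (X := (coextendScalars l).obj ((restrictScalars l).obj Y))
  { toFun g := ∑ i, D.x i • (g (D.y i) : Y)
    map_add' a b := by
      change ∑ i, D.x i • ((a (D.y i) : Y) + b (D.y i)) = _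
      simp only [smul_add, Finset.sum_add_distrib]
      rfl
    map_smul' s g := D.sum_x_smul_apply_y_mul (Y := Y) (CoextendScalars.equiv l _ g).toAddMonoidHom
      (CoextendScalars.apply_map_mul g) s }

def adjunction : coextendScalars l ⊣ restrictScalars.{0} l where
  unit :=
    { app := D.unitApp
      naturality X X' g := by
        ext v
        refine CoextendScalars.ext' fun z => ?_
        change D.E z • g v = g (D.E z • v)
        exact (map_smul g.hom _ _).symm }
  counit :=
    { app := D.counitApp
      naturality Y Y' g := by
        ext (f : (coextendScalars l).obj ((restrictScalars l).obj Y))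
        have h (v : Fin D.m → Y) : ∑ i, D.x i • g (v i) = g (∑ i, D.x i • v i) := by
          simp only [map_sum, map_smul]
        exact h fun i => f (D.y i) }
  left_triangle_components X := by
    ext f (z : S)
    change (∑ i, D.x i • (show (coextendScalars l).obj X from D.unitApp X (f (D.y i)))) z = f z
    rw [CoextendScalars.sum_apply]
    exact D.sum_E_mul_x_smul_apply_y (CoextendScalars.equiv l _ f).toAddMonoidHom
      (CoextendScalars.apply_map_mul f) z
  right_triangle_components Y := by
    ext w
    change ∑ i, D.x i • l (D.E (D.y i)) • (w : Y) = w
    conv_rhs => rw [← one_smul S (w : Y), ← D.sum_x_mul_E_y_mul 1]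
    simp only [mul_one, Finset.sum_smul, mul_smul]

end FrobeniusSystem

theorem IsFrobeniusExtension.nonempty_adjunction (h : IsFrobeniusExtension l) :
    Nonempty (coextendScalars l ⊣ restrictScalars.{0} l) :=
  let ⟨E, m, x, y, h₁, h₂, h₃, h₄⟩ := h
  ⟨FrobeniusSystem.adjunction ⟨E, m, x, y, h₁, h₂, h₃, h₄⟩⟩

section CentrallyProjective

variable {n : ℕ} {X : ModuleCat.{0} R}

def coextendScalarsToPi (p : (Fin n → R) →+ S)
    (hp₁ : ∀ r v, p (fun j => r * v j) = l r * p v)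
    (hp₂ : ∀ v r, p (fun j => v j * r) = p v * l r) :
    (restrictScalars l).obj ((coextendScalars l).obj X) ⟶ ModuleCat.of R (Fin n → X) :=
  ofHom (X := (restrictScalars l).obj ((coextendScalars l).obj X))
  { toFun (f : (coextendScalars l).obj X) j := f (p (Pi.single j 1))
    map_add' _ _ := rfl
    map_smul' r (f : (coextendScalars l).obj X) := funext fun j => by
      change f (p (Pi.single j 1) * l r) = r • f (p (Pi.single j 1))
      rw [← hp₂, ← CoextendScalars.apply_map_mul, ← hp₁]
      congr 2
      funext k
      simp [Pi.single_apply] }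

def piToCoextendScalars (i : S →+ (Fin n → R))
    (hi₁ : ∀ r s, i (l r * s) = fun j => r * i s j)
    (hi₂ : ∀ s r, i (s * l r) = fun j => i s j * r) :
    ModuleCat.of R (Fin n → X) ⟶ (restrictScalars l).obj ((coextendScalars l).obj X) :=
  ofHom (Y := (restrictScalars l).obj ((coextendScalars l).obj X))
  { toFun v := CoextendScalars.mk (fun z => ∑ j, i z j • v j)
      (fun a b => by simp only [map_add, Pi.add_apply, add_smul, Finset.sum_add_distrib])
      (fun r z => by simp only [hi₁, mul_smul, Finset.smul_sum])
    map_add' v w := CoextendScalars.ext' fun z => by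
      change ∑ j, i z j • (v j + w j) = ∑ j, i z j • v j + ∑ j, i z j • w j
      simp only [smul_add, Finset.sum_add_distrib]
    map_smul' r v := CoextendScalars.ext' fun z => by
      change ∑ j, i z j • r • v j = ∑ j, i (z * l r) j • v j
      simp only [hi₂, mul_smul] }

lemma coextendScalarsToPi_comp_piToCoextendScalars (i : S →+ (Fin n → R))
    (p : (Fin n → R) →+ S)
    (hi₁ : ∀ r s, i (l r * s) = fun j => r * i s j)
    (hi₂ : ∀ s r, i (s * l r) = fun j => i s j * r)
    (hp₁ : ∀ r v, p (fun j => r * v j) = l r * p v)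
    (hp₂ : ∀ v r, p (fun j => v j * r) = p v * l r) (hpi : ∀ s, p (i s) = s) :
    coextendScalarsToPi (X := X) p hp₁ hp₂ ≫ piToCoextendScalars i hi₁ hi₂ = 𝟙 _ := by
  refine ModuleCat.hom_ext (LinearMap.ext fun (f : (coextendScalars l).obj X) =>
    CoextendScalars.ext' fun z => ?_)
  change ∑ j, i z j • f (p (Pi.single j 1)) = f z
  calc ∑ j, i z j • f (p (Pi.single j 1))
      = ∑ j, f (p (Pi.single j (i z j))) := Finset.sum_congr rfl fun j _ => by
        rw [← CoextendScalars.apply_map_mul, ← hp₁]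
        congr 2
        funext k
        simp [Pi.single_apply]
    _ = f (∑ j, p (Pi.single j (i z j))) := (CoextendScalars.apply_sum f _ _).symm
    _ = f z := congrArg f
        (by rw [← map_sum, Finset.univ_sum_single, hpi] : ∑ j, p (Pi.single j (i z j)) = z)

end CentrallyProjective

theorem IsCentrallyProjective.exists_retract (h : IsCentrallyProjective l) (X : ModuleCat.{0} R) :
    ∃ n : ℕ, Nonempty
      (Retract ((restrictScalars l).obj ((coextendScalars l).obj X)) (ModuleCat.of R (Fin n → X))) :=
  let ⟨n, i, p, hi₁, hi₂, hp₁, hp₂, hpi⟩ := h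
  ⟨n, ⟨⟨_, _, coextendScalarsToPi_comp_piToCoextendScalars i p hi₁ hi₂ hp₁ hp₂ hpi⟩⟩⟩

namespace IsInducedTensor

variable {M : Type} [AddCommGroup M] [Module R M] {V : Type} [AddCommGroup V] [Module S V]
  {u : S →+ M →+ V}

lemma hom_ext (hV : IsInducedTensor l M V u) {Y : ModuleCat.{0} S} {h h' : ModuleCat.of S V ⟶ Y}
    (H : ∀ s m, h (u s m) = h' (u s m)) : h = h' := by
  have hb := hV.2.2 Y (u.compr₂ h.hom.toAddMonoidHom)
    (fun s r m => congrArg h (hV.1 s r m)) (fun s' s m => by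
      simp only [AddMonoidHom.compr₂_apply]; rw [hV.2.1]; exact h.hom.map_smul s' (u s m))
  exact ModuleCat.hom_ext (hb.unique (fun _ _ => rfl) fun s m => (H s m).symm)

lemma existsUnique_lift (hV : IsInducedTensor l M V u) {Y : ModuleCat.{0} S}
    (g : ModuleCat.of R M ⟶ (restrictScalars l).obj Y) :
    ∃! h : V →ₗ[S] Y, ∀ s m, h (u s m) = s • (g m : Y) :=
  hV.2.2 Y ((smulAddHom S Y).compl₂ g.hom.toAddMonoidHom)
    (fun s r m => by
      change (s * l r) • (g m : Y) = s • (g (r • m) : Y)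
      rw [map_smul, mul_smul]; rfl)
    (fun s' s m => mul_smul s' s (g m : Y))

def lift (hV : IsInducedTensor l M V u) {Y : ModuleCat.{0} S}
    (g : ModuleCat.of R M ⟶ (restrictScalars l).obj Y) : ModuleCat.of S V ⟶ Y :=
  ofHom (hV.existsUnique_lift g).exists.choose

lemma lift_apply (hV : IsInducedTensor l M V u) {Y : ModuleCat.{0} S}
    (g : ModuleCat.of R M ⟶ (restrictScalars l).obj Y) (s : S) (m : M) :
    hV.lift g (u s m) = s • (g m : Y) :=
  (hV.existsUnique_lift g).exists.choose_spec s m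

lemma lift_comp (hV : IsInducedTensor l M V u) {Y Y' : ModuleCat.{0} S}
    (g : ModuleCat.of R M ⟶ (restrictScalars l).obj Y) (k : Y ⟶ Y') :
    hV.lift g ≫ k = hV.lift (g ≫ (restrictScalars l).map k) :=
  hV.hom_ext fun s m => by
    rw [ModuleCat.comp_apply, lift_apply, lift_apply]
    exact map_smul k.hom s _

lemma apply_eq_smul (hV : IsInducedTensor l M V u) (s : S) (m : M) : u s m = s • u 1 m := by
  rw [← hV.2.1, mul_one]

def incl (hV : IsInducedTensor l M V u) :
    ModuleCat.of R M ⟶ (restrictScalars l).obj (ModuleCat.of S V) :=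
  ofHom (Y := (restrictScalars l).obj (ModuleCat.of S V))
  { toFun m := u 1 m
    map_add' := map_add (u 1)
    map_smul' r m := by
      change u 1 (r • m) = l r • u 1 m
      rw [← hV.1, one_mul, hV.apply_eq_smul] }

lemma lift_incl (hV : IsInducedTensor l M V u) : hV.lift hV.incl = 𝟙 _ :=
  hV.hom_ext fun s m => by
    rw [lift_apply]
    exact (hV.apply_eq_smul s m).symm

lemma incl_comp_lift (hV : IsInducedTensor l M V u) {Y : ModuleCat.{0} S}
    (g : ModuleCat.of R M ⟶ (restrictScalars l).obj Y) :
    hV.incl ≫ (restrictScalars l).map (hV.lift g) = g := by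
  ext m
  exact (hV.lift_apply g 1 m).trans (one_smul S _)

def isoOfAdjunction (hV : IsInducedTensor l M V u) {L : ModuleCat.{0} R ⥤ ModuleCat.{0} S}
    (adj : L ⊣ restrictScalars l) : ModuleCat.of S V ≅ L.obj (ModuleCat.of R M) where
  hom := hV.lift (adj.unit.app _)
  inv := (adj.homEquiv _ _).symm hV.incl
  hom_inv_id := by
    rw [lift_comp, ← adj.homEquiv_unit, Equiv.apply_symm_apply, lift_incl]
  inv_hom_id := by
    rw [← adj.homEquiv_naturality_right_symm, incl_comp_lift, ← adj.homEquiv_id,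
      Equiv.symm_apply_apply]

end IsInducedTensor

theorem extVanish_inducedTensor_of_extVanish_general
    (R S : Type) [Ring R] [Ring S] (l : R →+* S)
    (hFrob : IsFrobeniusExtension l) (hCP : IsCentrallyProjective l)
    (ω : Type) [AddCommGroup ω] [Module R ω]
    (M : Type) [AddCommGroup M] [Module R M]
    (hM : ∀ i, 1 ≤ i → ExtVanish R i M ω)
    (W : Type) [AddCommGroup W] [Module S W] (t : S →+ ω →+ W)
    (hW : IsInducedTensor l ω W t)
    (V : Type) [AddCommGroup V] [Module S V] (u : S →+ M →+ V)
    (hV : IsInducedTensor l M V u) :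
    ∀ i, 1 ≤ i → ExtVanish S i V W := by
  obtain ⟨adj⟩ := hFrob.nonempty_adjunction
  have := adj.leftAdjoint_preservesColimits
  obtain ⟨k, ⟨e⟩⟩ := hCP.exists_retract (ModuleCat.of R ω)
  intro i hi
  obtain ⟨n, rfl⟩ := Nat.exists_eq_add_of_le' hi
  let extM := (Ext ℤ (ModuleCat.{0} R) (n + 1)).obj (Opposite.op (ModuleCat.of R M))
  have hωk : IsZero (extM.obj (ModuleCat.of R (Fin k → ω))) :=
    isZero_ext_succ_pi _ fun _ => ModuleCat.isZero_iff_subsingleton.2 (hM _ hi)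
  have hWR : IsZero (extM.obj ((restrictScalars l).obj (ModuleCat.of S W))) :=
    (IsZero.of_mono (e.map extM).i hωk).of_iso
      (extM.mapIso ((restrictScalars l).mapIso (hW.isoOfAdjunction adj)))
  refine ModuleCat.isZero_iff_subsingleton.1 (hWR.of_iso ?_)
  exact ((Ext ℤ _ (n + 1)).mapIso (hV.isoOfAdjunction adj).op).symm.app _ ≪≫
    adj.extIso (ModuleCat.of R M) (ModuleCat.of S W) (n + 1)

/-- Let `S/R` be a Frobenius extension with `_R S_R` centrally
projective over `R` and `M` a finitely generated `R`-module with
`Ext^i_R(M, ω) = 0` for all `i ≥ 1`.  Then `Ext^i_S(S ⊗_R M, S ⊗_R ω) = 0` for all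
`i ≥ 1`, where `(W, t)` and `(V, u)` realize `S ⊗_R ω` and `S ⊗_R M`. -/
theorem extVanish_inducedTensor_of_extVanish
    (R S : Type) [Ring R] [Ring S] [IsNoetherianRing R] [IsNoetherianRing Rᵐᵒᵖ]
    [IsNoetherianRing S] [IsNoetherianRing Sᵐᵒᵖ] (l : R →+* S)
    (hFrob : IsFrobeniusExtension l) (hCP : IsCentrallyProjective l)
    (ω : Type) [AddCommGroup ω] [Module R ω] [Module.Finite R ω]
    (M : Type) [AddCommGroup M] [Module R M] [Module.Finite R M]
    (hM : ∀ i, 1 ≤ i → ExtVanish R i M ω)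
    (W : Type) [AddCommGroup W] [Module S W] (t : S →+ ω →+ W)
    (hW : IsInducedTensor l ω W t)
    (V : Type) [AddCommGroup V] [Module S V] (u : S →+ M →+ V)
    (hV : IsInducedTensor l M V u) :
    ∀ i, 1 ≤ i → ExtVanish S i V W :=
  extVanish_inducedTensor_of_extVanish_general R S l hFrob hCP ω M hM W t hW V u hV
end
end
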